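/- Let Ω ⊆ ℝⁿ be open, A : Ω → Lin(V, W) continuous (V, W finite-dimensional inner product spaces), and ξ₀ ∈ Ω. If there is a sequence ξ_m → ξ₀ with rank(A(ξ_m)) > rank(A(ξ₀)) for all m, then the map ξ ↦ ‖A(ξ)†‖ is unbounded on every neighborhood of ξ₀. -/

import Mathlib

open Module LinearMap Metric Filter Topology Polynomial

/-- Orthogonal projection onto a submodule, as an endomorphism. -/
noncomputable def orthProj {E : Type*} [NormedAddCommGroup E] [InnerProductSpace ℝ E]
    [FiniteDimensional ℝ E] (K : Submodule ℝ E) : E →L[ℝ] E :=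
  K.subtypeL.comp (Submodule.orthogonalProjectionOnto K)

/-- `X` is the Moore–Penrose pseudoinverse of `A`: `A X = Proj_{im A}`,
`X A = Proj_{im A*}`, together with the normalization `X Proj_{im A} = X`
(i.e. `X` vanishes on `(im A)ᗮ`), which pins `X` down uniquely. -/
def IsMP {V W : Type*} [NormedAddCommGroup V] [InnerProductSpace ℝ V] [FiniteDimensional ℝ V]
    [NormedAddCommGroup W] [InnerProductSpace ℝ W] [FiniteDimensional ℝ W]
    (A : V →L[ℝ] W) (X : W →L[ℝ] V) : Prop :=
  A ∘L X = orthProj (LinearMap.range (A : V →ₗ[ℝ] W)) ∧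
  X ∘L A = orthProj (LinearMap.range (ContinuousLinearMap.adjoint A : W →ₗ[ℝ] V)) ∧
  X ∘L orthProj (LinearMap.range (A : V →ₗ[ℝ] W)) = X

/-
A jump in rank forces a nonzero vector `v` in the row space of `B = A(ξ_m)` that `A₀ = A(ξ₀)`
annihilates. The pseudoinverse restores `v` from `B v = (B - A₀) v`, so
`1 ≤ ‖A(ξ_m)†‖ ‖A(ξ_m) - A(ξ₀)‖`; by continuity the second factor tends to `0`.
-/

theorem LinearMap.exists_mem_ker_ne_zero_of_finrank_range_lt {K V V₂ : Type*} [DivisionRing K]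
    [AddCommGroup V] [Module K V] [FiniteDimensional K V] [AddCommGroup V₂] [Module K V₂]
    (f : V →ₗ[K] V₂) {S : Submodule K V} (h : finrank K (range f) < finrank K S) :
    ∃ v ∈ S, f v = 0 ∧ v ≠ 0 := by
  by_contra! hS
  have := Submodule.finrank_add_finrank_le_of_disjoint
    (Submodule.disjoint_def.2 hS : Disjoint S (ker f))
  have := f.finrank_range_add_finrank_ker
  omega

theorem norm_sub_pos_of_finrank_range_lt {V W : Type*}
    [NormedAddCommGroup V] [NormedSpace ℝ V] [NormedAddCommGroup W] [NormedSpace ℝ W]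
    {B A₀ : V →L[ℝ] W}
    (hr : finrank ℝ (range (A₀ : V →ₗ[ℝ] W))
      < finrank ℝ (range (B : V →ₗ[ℝ] W))) :
    0 < ‖B - A₀‖ :=
  norm_pos_iff.2 <| sub_ne_zero.2 <| by rintro rfl; exact hr.false

section

variable {V W : Type*} [NormedAddCommGroup V] [InnerProductSpace ℝ V] [FiniteDimensional ℝ V]
  [NormedAddCommGroup W] [InnerProductSpace ℝ W] [FiniteDimensional ℝ W]

theorem IsMP.apply_apply_of_mem_range_adjoint {B : V →L[ℝ] W} {X : W →L[ℝ] V}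
    (hX : IsMP B X) {v : V} (hv : v ∈ range (ContinuousLinearMap.adjoint B : W →ₗ[ℝ] V)) :
    X (B v) = v := by
  have := congr($(hX.2.1) v)
  rw [orthProj, ContinuousLinearMap.comp_apply, ContinuousLinearMap.comp_apply,
    Submodule.subtypeL_apply] at this
  exact this.trans (Submodule.starProjection_eq_self_iff.2 hv)

theorem IsMP.inv_norm_sub_le_norm {B A₀ : V →L[ℝ] W} {X : W →L[ℝ] V} (hX : IsMP B X)
    (hr : finrank ℝ (range (A₀ : V →ₗ[ℝ] W))
      < finrank ℝ (range (B : V →ₗ[ℝ] W))) :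
    ‖B - A₀‖⁻¹ ≤ ‖X‖ := by
  have hr' : finrank ℝ (range (A₀ : V →ₗ[ℝ] W))
      < finrank ℝ (range (ContinuousLinearMap.adjoint B : W →ₗ[ℝ] V)) := by
    rwa [← ContinuousLinearMap.adjoint_toLinearMap, finrank_range_adjoint]
  obtain ⟨v, hvB, hvA₀, hv⟩ :=
    (A₀ : V →ₗ[ℝ] W).exists_mem_ker_ne_zero_of_finrank_range_lt hr'
  have hvX : ‖v‖ ≤ ‖X‖ * ‖B - A₀‖ * ‖v‖ :=
    calc ‖v‖ = ‖X ((B - A₀) v)‖ := by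
          rw [_root_.sub_apply, show A₀ v = 0 from hvA₀, sub_zero,
            hX.apply_apply_of_mem_range_adjoint hvB]
      _ ≤ ‖X‖ * (‖B - A₀‖ * ‖v‖) := X.le_opNorm_of_le ((B - A₀).le_opNorm v)
      _ = ‖X‖ * ‖B - A₀‖ * ‖v‖ := by ring
  rw [inv_le_iff_one_le_mul₀ (norm_sub_pos_of_finrank_range_lt hr)]
  exact le_of_mul_le_mul_right (by simpa using hvX) (norm_pos_iff.2 hv)

end

/-- If a sequence `ξ_m → ξ₀` has `rank A(ξ_m) > rank A(ξ₀)`, then `ξ ↦ ‖A(ξ)†‖`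
is unbounded on every neighborhood of `ξ₀`. -/
theorem pseudoinverse_unbounded_of_rank_jump
    {V W : Type*} [NormedAddCommGroup V] [InnerProductSpace ℝ V] [FiniteDimensional ℝ V]
    [NormedAddCommGroup W] [InnerProductSpace ℝ W] [FiniteDimensional ℝ W]
    {n : ℕ} (Ω : Set (EuclideanSpace ℝ (Fin n))) (hΩ : IsOpen Ω)
    (A : EuclideanSpace ℝ (Fin n) → (V →L[ℝ] W)) (hA : ContinuousOn A Ω)
    (ξ₀ : EuclideanSpace ℝ (Fin n)) (hξ₀ : ξ₀ ∈ Ω)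
    (ξ : ℕ → EuclideanSpace ℝ (Fin n)) (hmem : ∀ m, ξ m ∈ Ω)
    (hlim : Tendsto ξ atTop (𝓝 ξ₀))
    (hrank : ∀ m, finrank ℝ (LinearMap.range (A ξ₀ : V →ₗ[ℝ] W)) < finrank ℝ (LinearMap.range (A (ξ m) : V →ₗ[ℝ] W)))
    (Adag : EuclideanSpace ℝ (Fin n) → (W →L[ℝ] V))
    (hdag : ∀ ζ ∈ Ω, IsMP (A ζ) (Adag ζ)) :
    ∀ U ∈ 𝓝 ξ₀, ∀ M : ℝ, ∃ ζ ∈ U ∩ Ω, M < ‖Adag ζ‖ := by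
  have hAξ : Tendsto (fun m => A (ξ m)) atTop (𝓝 (A ξ₀)) :=
    (hA.continuousAt (hΩ.mem_nhds hξ₀)).tendsto.comp hlim
  have hgap : Tendsto (fun m => ‖A (ξ m) - A ξ₀‖) atTop (𝓝[>] 0) :=
    tendsto_nhdsWithin_of_tendsto_nhds_of_eventually_within _
      (tendsto_iff_norm_sub_tendsto_zero.1 hAξ)
      (Eventually.of_forall fun m => norm_sub_pos_of_finrank_range_lt (hrank m))
  have hblow : Tendsto (fun m => ‖Adag (ξ m)‖) atTop atTop :=
    tendsto_atTop_mono (fun m => (hdag _ (hmem m)).inv_norm_sub_le_norm (hrank m))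
      (tendsto_inv_nhdsGT_zero.comp hgap)
  intro U hU M
  obtain ⟨m, hmU, hmM⟩ := ((hlim.eventually_mem hU).and (hblow.eventually_gt_atTop M)).exists
  exact ⟨ξ m, ⟨hmU, hmem m⟩, hmM⟩
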